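/- arXiv:2504.15854 — 3 statements merged into one kernel-verified Lean document; each statement's English description precedes it below -/
import Mathlib

section
/- If n points are sampled i.i.d. from a distribution on [0,1]^d whose density is bounded below by δ > 0, and [0,1]^d is partitioned into an ε-net of hypercubes with side ε ≥ n^{-1/(2d)}, then with probability at least 1 - √n · exp(-δ√n/8), every hypercube contains at least (δ/2)√n of the sampled points. -/
/-!
Each cube of the net has Lebesgue volume `k⁻ᵈ ≥ 1/√n`, so by the density bound each sample lands
in it with probability at least `δ/√n`, and its count has mean at least `δ√n`. The multiplicative
Chernoff bound (the exponential moment bound at `t = -log 2`) makes the count fall below half of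
that with probability at most `exp(-δ√n/8)`, and a union bound over the `kᵈ ≤ √n` cubes finishes.
-/

open MeasureTheory Real
open scoped Classical

/-- The hypercube of the ε-net of `[0,1]^d` (side `ε = 1/k`) indexed by `b : Fin d → Fin k`. -/
def netCube (d k : ℕ) (b : Fin d → Fin k) : Set (Fin d → ℝ) :=
  {x | ∀ j, (b j : ℝ) / k ≤ x j ∧ x j < ((b j : ℝ) + 1) / k}

open Finset ProbabilityTheory

section Chernoff

lemma exp_mul_card_filter_mem {ι Ω : Type*} [Fintype ι] {C : Set Ω} (t : ℝ) (ω : ι → Ω) :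
    exp (t * #{i | ω i ∈ C}) = ∏ i, (1 + C.indicator (fun _ => exp t - 1) (ω i)) := by
  rw [natCast_card_filter, mul_sum, exp_sum]
  refine prod_congr rfl fun i _ => ?_
  by_cases h : ω i ∈ C <;> simp [h]

variable {ι Ω : Type*} [Fintype ι] [MeasurableSpace Ω] {μ : Measure Ω} [IsProbabilityMeasure μ]
  {C : Set Ω}

lemma integrable_exp_mul_card_filter_mem (hC : MeasurableSet C) (t : ℝ) :
    Integrable (fun ω : ι → Ω => exp (t * #{i | ω i ∈ C})) (Measure.pi fun _ => μ) := by
  simp only [exp_mul_card_filter_mem]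
  exact Integrable.fintype_prod fun _ =>
    (integrable_const (1 : ℝ)).add ((integrable_const _).indicator hC)

lemma mgf_card_filter_mem (hC : MeasurableSet C) (t : ℝ) :
    mgf (fun ω : ι → Ω => (#{i | ω i ∈ C} : ℝ)) (Measure.pi fun _ => μ) t
      = (1 + (exp t - 1) * μ.real C) ^ Fintype.card ι := by
  have h_one_add : ∫ x, 1 + C.indicator (fun _ => exp t - 1) x ∂μ
      = 1 + (exp t - 1) * μ.real C := by
    rw [integral_add (integrable_const 1) ((integrable_const _).indicator hC), integral_const,
      integral_indicator_const _ hC]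
    simp [mul_comm]
  simp only [mgf, exp_mul_card_filter_mem]
  rw [integral_fintype_prod_eq_pow (fun x => 1 + C.indicator (fun _ => exp t - 1) x), h_one_add]

/-- Chernoff's bound at `t = -log 2`. -/
lemma measureReal_card_filter_mem_le_le (hC : MeasurableSet C) (a : ℝ) :
    (Measure.pi fun _ : ι => μ).real {ω | (#{i | ω i ∈ C} : ℝ) ≤ a}
      ≤ exp (log 2 * a - Fintype.card ι * μ.real C / 2) := by
  have hchernoff := measure_le_le_exp_mul_mgf a (neg_nonpos.mpr (log_nonneg one_le_two))
    (integrable_exp_mul_card_filter_mem hC (ι := ι) (μ := μ) (-log 2))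
  rw [mgf_card_filter_mem hC, exp_neg, exp_log two_pos, neg_neg] at hchernoff
  refine hchernoff.trans ?_
  have hfactor : 1 + (2⁻¹ - 1) * μ.real C ≤ exp (-(μ.real C / 2)) := by
    linarith [add_one_le_exp (-(μ.real C / 2))]
  calc exp (log 2 * a) * (1 + (2⁻¹ - 1) * μ.real C) ^ Fintype.card ι
      ≤ exp (log 2 * a) * exp (-(μ.real C / 2)) ^ Fintype.card ι := by
        gcongr
        nlinarith [measureReal_le_one (μ := μ) (s := C)]
    _ = exp (log 2 * a - Fintype.card ι * μ.real C / 2) := by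
        rw [← exp_nat_mul, ← exp_add]
        ring_nf

lemma measure_card_filter_mem_le_half_le (hC : MeasurableSet C) {m : ℝ} (hm : 0 ≤ m)
    (hmC : m ≤ Fintype.card ι * μ.real C) :
    (Measure.pi fun _ : ι => μ) {ω | (#{i | ω i ∈ C} : ℝ) ≤ m / 2}
      ≤ ENNReal.ofReal (exp (-(m / 8))) := by
  rw [← ofReal_measureReal]
  refine ENNReal.ofReal_le_ofReal ((measureReal_card_filter_mem_le_le hC _).trans ?_)
  have hlog2 := log_two_lt_d9
  gcongr
  nlinarith

lemma ofReal_one_sub_le_measure_forall_half_le_card_filter_mem {κ : Type*} [Fintype κ]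
    {C : κ → Set Ω} (hC : ∀ b, MeasurableSet (C b)) {m : ℝ} (hm : 0 ≤ m)
    (hmC : ∀ b, m ≤ Fintype.card ι * μ.real (C b)) :
    ENNReal.ofReal (1 - Fintype.card κ * exp (-(m / 8)))
      ≤ Measure.pi (fun _ : ι => μ) {ω | ∀ b, m / 2 ≤ (#{i | ω i ∈ C b} : ℝ)} := by
  set P := Measure.pi fun _ : ι => μ
  set G := {ω : ι → Ω | ∀ b, m / 2 ≤ (#{i | ω i ∈ C b} : ℝ)}
  have hbad : P Gᶜ ≤ ENNReal.ofReal (Fintype.card κ * exp (-(m / 8))) := calc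
    P Gᶜ ≤ P (⋃ b, {ω | (#{i | ω i ∈ C b} : ℝ) ≤ m / 2}) := by
        refine measure_mono fun ω hω => ?_
        simp only [G, Set.mem_compl_iff, Set.mem_ofPred_eq, not_forall, not_le] at hω
        obtain ⟨b, hb⟩ := hω
        exact Set.mem_iUnion.mpr ⟨b, hb.le⟩
    _ ≤ ∑ b, P {ω | (#{i | ω i ∈ C b} : ℝ) ≤ m / 2} := measure_iUnion_fintype_le _ _
    _ ≤ ∑ _b : κ, ENNReal.ofReal (exp (-(m / 8))) :=
        sum_le_sum fun b _ => measure_card_filter_mem_le_half_le (hC b) hm (hmC b)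
    _ = ENNReal.ofReal (Fintype.card κ * exp (-(m / 8))) := by
        rw [sum_const, card_univ, nsmul_eq_mul, ENNReal.ofReal_mul (by positivity),
          ENNReal.ofReal_natCast]
  calc ENNReal.ofReal (1 - Fintype.card κ * exp (-(m / 8)))
      = 1 - ENNReal.ofReal (Fintype.card κ * exp (-(m / 8))) := by
        rw [ENNReal.ofReal_sub _ (by positivity), ENNReal.ofReal_one]
    _ ≤ 1 - P Gᶜ := tsub_le_tsub_left hbad 1
    _ ≤ P G := by
        rw [tsub_le_iff_right, ← measure_univ (μ := P)]
        exact measure_univ_le_add_compl G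

end Chernoff

section NetCube

variable {d k : ℕ} (b : Fin d → Fin k)

lemma netCube_eq_pi :
    netCube d k b = Set.univ.pi fun j => Set.Ico ((b j : ℝ) / k) ((b j + 1) / k) := by
  ext x
  simp [netCube, Set.mem_pi]

lemma measurableSet_netCube : MeasurableSet (netCube d k b) := by
  rw [netCube_eq_pi]
  exact MeasurableSet.univ_pi fun _ => measurableSet_Ico

lemma netCube_subset_pi_Icc : netCube d k b ⊆ Set.univ.pi fun _ => Set.Icc 0 1 := by
  intro x hx j _
  obtain ⟨hlow, hup⟩ := hx j
  have hbk : (b j : ℝ) + 1 ≤ k := by exact_mod_cast (b j).isLt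
  exact ⟨(by positivity : (0 : ℝ) ≤ b j / k).trans hlow,
    hup.le.trans (div_le_one_of_le₀ hbk (Nat.cast_nonneg k))⟩

lemma volume_netCube : volume (netCube d k b) = ENNReal.ofReal ((1 / k) ^ d) := by
  simp only [netCube_eq_pi, volume_pi_pi, Real.volume_Ico, add_sub_cancel_left, add_div,
    prod_const, card_univ, Fintype.card_fin]
  rw [ENNReal.ofReal_pow (by positivity), one_div]

lemma mul_pow_le_measureReal_netCube {δ : ℝ} (hδ : 0 ≤ δ) {μ : Measure (Fin d → ℝ)}
    [IsFiniteMeasure μ]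
    (hdens : ∀ S : Set (Fin d → ℝ), MeasurableSet S →
      S ⊆ (Set.univ.pi fun _ : Fin d => Set.Icc (0 : ℝ) 1) →
      ENNReal.ofReal δ * volume S ≤ μ S) :
    δ * (1 / k) ^ d ≤ μ.real (netCube d k b) := by
  have h := hdens _ (measurableSet_netCube b) (netCube_subset_pi_Icc b)
  rw [volume_netCube, ← ENNReal.ofReal_mul hδ] at h
  exact (ENNReal.ofReal_le_iff_le_toReal (measure_ne_top μ _)).mp h

end NetCube

lemma rpow_neg_one_div_two_mul_pow {x : ℝ} (hx : 0 ≤ x) {d : ℕ} (hd : d ≠ 0) :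
    (x ^ (-1 / (2 * d) : ℝ)) ^ d = (√x)⁻¹ := by
  rw [← rpow_natCast, ← rpow_mul hx, sqrt_eq_rpow, ← rpow_neg hx]
  congr 1
  field_simp

theorem stmt_0_general (d n k : ℕ) (hd : 1 ≤ d) (hn : 1 ≤ n)
    (δ : ℝ) (hδ : 0 < δ)
    (μ : Measure (Fin d → ℝ)) [IsProbabilityMeasure μ]
    (hdens : ∀ S : Set (Fin d → ℝ), MeasurableSet S →
      S ⊆ (Set.univ.pi fun _ : Fin d => Set.Icc (0 : ℝ) 1) →
      ENNReal.ofReal δ * volume S ≤ μ S)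
    (hε : (n : ℝ) ^ (-(1 : ℝ) / (2 * d)) ≤ (1 : ℝ) / k) :
    ENNReal.ofReal (1 - Real.sqrt n * Real.exp (-(δ * Real.sqrt n / 8))) ≤
      Measure.pi (fun _ : Fin n => μ)
        {ω | ∀ b : Fin d → Fin k,
          δ / 2 * Real.sqrt n ≤
            ((Finset.univ.filter fun i : Fin n => ω i ∈ netCube d k b).card : ℝ)} := by
  have hn0 : (0 : ℝ) < n := by exact_mod_cast hn
  have hk : (0 : ℝ) < k := one_div_pos.mp ((rpow_pos_of_pos hn0 _).trans_le hε)
  have hvol : (√n)⁻¹ ≤ (1 / k : ℝ) ^ d := by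
    rw [← rpow_neg_one_div_two_mul_pow hn0.le (Nat.one_le_iff_ne_zero.mp hd)]
    gcongr
  have hcard : (Fintype.card (Fin d → Fin k) : ℝ) ≤ √n := by
    rw [one_div_pow, one_div, inv_le_inv₀ (sqrt_pos.mpr hn0) (by positivity)] at hvol
    simpa using hvol
  have hmass (b : Fin d → Fin k) : δ * √n ≤ Fintype.card (Fin n) * μ.real (netCube d k b) := calc
    δ * √n = n * (δ * (√n)⁻¹) := by rw [← div_eq_mul_inv, mul_div_left_comm, div_sqrt]
    _ ≤ n * (δ * (1 / k) ^ d) := by gcongr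
    _ ≤ Fintype.card (Fin n) * μ.real (netCube d k b) := by
      rw [Fintype.card_fin]
      gcongr
      exact mul_pow_le_measureReal_netCube b hδ.le hdens
  calc ENNReal.ofReal (1 - √n * exp (-(δ * √n / 8)))
      ≤ ENNReal.ofReal (1 - Fintype.card (Fin d → Fin k) * exp (-(δ * √n / 8))) := by
        gcongr
    _ ≤ _ := by
        simp_rw [div_mul_eq_mul_div]
        exact ofReal_one_sub_le_measure_forall_half_le_card_filter_mem
          (fun b => measurableSet_netCube b) (by positivity) hmass

/-- If `n` points are sampled i.i.d. from a distribution on `[0,1]^d` whose density is bounded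
below by `δ > 0`, and `[0,1]^d` is partitioned into the ε-net of hypercubes of side
`ε = 1/k ≥ n^(-1/(2d))`, then with probability at least `1 - √n exp(-δ√n/8)` every hypercube
contains at least `(δ/2)√n` of the sampled points. -/
theorem stmt_0 (d n k : ℕ) (hd : 1 ≤ d) (hn : 1 ≤ n) (hk : 1 ≤ k)
    (δ : ℝ) (hδ : 0 < δ)
    (μ : Measure (Fin d → ℝ)) [IsProbabilityMeasure μ]
    (hsupp : μ (Set.univ.pi fun _ : Fin d => Set.Icc (0 : ℝ) 1) = 1)
    (hdens : ∀ S : Set (Fin d → ℝ), MeasurableSet S →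
      S ⊆ (Set.univ.pi fun _ : Fin d => Set.Icc (0 : ℝ) 1) →
      ENNReal.ofReal δ * volume S ≤ μ S)
    (hε : (n : ℝ) ^ (-(1 : ℝ) / (2 * d)) ≤ (1 : ℝ) / k) :
    ENNReal.ofReal (1 - Real.sqrt n * Real.exp (-(δ * Real.sqrt n / 8))) ≤
      Measure.pi (fun _ : Fin n => μ)
        {ω | ∀ b : Fin d → Fin k,
          δ / 2 * Real.sqrt n ≤
            ((Finset.univ.filter fun i : Fin n => ω i ∈ netCube d k b).card : ℝ)} :=
  stmt_0_general d n k hd hn δ hδ μ hdens hε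
end

section
/- Lower bound on (ℓ−1)-clustering error: let μ_0 < ... < μ_{ℓ-1} with gaps at least κ, and let a_1, ..., a_N be real numbers such that for each level c, at least M of the a_j satisfy |a_j − μ_c| ≤ η, where η < κ/2. Then for any ℓ−1 centers θ_0,...,θ_{ℓ-2}, the total squared error Σ_j min_i (a_j − θ_i)² is at least M (κ/2 − η)². -/
/-!
Among `ℓ` means that are pairwise at least `κ` apart, each of the `ℓ - 1` centers lies within
`κ/2` of at most one of them, so by pigeonhole some mean `μ c` has every center at distance at
least `κ/2`. Each of the at least `M` points within `η` of `μ c` is then at distance at least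
`κ/2 - η` from every center and contributes at least `(κ/2 - η)²` to the error.
-/

open Finset

lemma add_le_of_lt_of_gap {μ : ℕ → ℝ} {κ : ℝ} {ℓ : ℕ} (hκ : 0 ≤ κ)
    (hgap : ∀ i, i + 1 < ℓ → μ i + κ ≤ μ (i + 1)) {c c' : ℕ} (hcc' : c < c') (hc' : c' < ℓ) :
    μ c + κ ≤ μ c' := by
  induction c', hcc' using Nat.le_induction with
  | base => exact hgap c hc'
  | succ d hcd ih =>
    have := hgap d hc'
    linarith [ih (by omega)]

lemma le_abs_sub_of_gap {μ : ℕ → ℝ} {κ : ℝ} {ℓ : ℕ} (hκ : 0 ≤ κ)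
    (hgap : ∀ i, i + 1 < ℓ → μ i + κ ≤ μ (i + 1)) {c c' : ℕ} (hc : c < ℓ) (hc' : c' < ℓ)
    (hne : c ≠ c') : κ ≤ |μ c - μ c'| := by
  rcases hne.lt_or_gt with h | h
  · rw [abs_sub_comm, le_abs]
    left
    linarith [add_le_of_lt_of_gap hκ hgap h hc']
  · rw [le_abs]
    left
    linarith [add_le_of_lt_of_gap hκ hgap h hc]

lemma exists_forall_half_le_abs_sub_of_card_lt {ι : Type*} [Fintype ι] {μ : ℕ → ℝ} {κ : ℝ}
    {ℓ : ℕ} (hsep : ∀ c c', c < ℓ → c' < ℓ → c ≠ c' → κ ≤ |μ c - μ c'|)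
    (θ : ι → ℝ) (hcard : Fintype.card ι < ℓ) :
    ∃ c < ℓ, ∀ i, κ / 2 ≤ |θ i - μ c| := by
  by_contra! hnear
  choose g hg using hnear
  obtain ⟨x, y, hxy, hgxy⟩ :=
    Fintype.exists_ne_map_eq_of_card_lt (fun c : Fin ℓ => g c c.2) (by simpa using hcard)
  have hx := hg x x.2
  have hy := hg y y.2
  rw [hgxy] at hx
  have := abs_sub_le (μ x) (θ (g y y.2)) (μ y)
  rw [abs_sub_comm (μ x) (θ _)] at this
  linarith [hsep x y x.2 y.2 (Fin.val_injective.ne hxy)]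

lemma sq_sub_le_iInf_sq {ι : Type*} [Nonempty ι] {θ : ι → ℝ} {m x r η : ℝ}
    (hfar : ∀ i, r ≤ |θ i - m|) (hx : |x - m| ≤ η) (hηr : η ≤ r) :
    (r - η) ^ 2 ≤ ⨅ i, (x - θ i) ^ 2 := by
  refine le_ciInf fun i => ?_
  have hdist : r - η ≤ |x - θ i| := by
    have := abs_sub_le (θ i) x m
    rw [abs_sub_comm (θ i) x] at this
    linarith [hfar i]
  rw [← sq_abs (x - θ i)]
  exact pow_le_pow_left₀ (by linarith) hdist 2

theorem stmt_6_general (ℓ : ℕ) (hℓ : 2 ≤ ℓ) (κ η : ℝ) (hκ : 0 < κ) (hηκ : η < κ / 2)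
    (μ : ℕ → ℝ) (hgap : ∀ i, i + 1 < ℓ → μ i + κ ≤ μ (i + 1))
    (N M : ℕ) (a : Fin N → ℝ)
    (hM : ∀ c < ℓ, M ≤ (Finset.univ.filter (fun j => |a j - μ c| ≤ η)).card)
    (θ : Fin (ℓ - 1) → ℝ) :
    (M : ℝ) * (κ / 2 - η) ^ 2 ≤ ∑ j, ⨅ i : Fin (ℓ - 1), (a j - θ i) ^ 2 := by
  have : Nonempty (Fin (ℓ - 1)) := ⟨⟨0, by omega⟩⟩
  obtain ⟨c, hcℓ, hfar⟩ := exists_forall_half_le_abs_sub_of_card_lt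
    (fun c c' hc hc' hne => le_abs_sub_of_gap hκ.le hgap hc hc' hne) θ (by simp; omega)
  set s := univ.filter fun j => |a j - μ c| ≤ η
  calc (M : ℝ) * (κ / 2 - η) ^ 2
      ≤ #s * (κ / 2 - η) ^ 2 := by gcongr; exact_mod_cast hM c hcℓ
    _ ≤ ∑ j ∈ s, ⨅ i, (a j - θ i) ^ 2 := by
        rw [← nsmul_eq_mul]
        exact card_nsmul_le_sum _ _ _ fun j hj =>
          sq_sub_le_iInf_sq hfar (mem_filter.mp hj).2 hηκ.le
    _ ≤ ∑ j, ⨅ i, (a j - θ i) ^ 2 :=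
        sum_le_sum_of_subset_of_nonneg (subset_univ s) fun j _ _ =>
          le_ciInf fun i => sq_nonneg _

/-- Lower bound on the (ℓ-1)-clustering error: if the level means `μ 0 < … < μ (ℓ-1)` have
consecutive gaps at least `κ`, and for every level `c` at least `M` of the data points `a j`
lie within `η < κ/2` of `μ c`, then any `ℓ - 1` centers incur total squared error at least
`M (κ/2 - η)²`. -/
theorem stmt_6 (ℓ : ℕ) (hℓ : 2 ≤ ℓ) (κ η : ℝ) (hκ : 0 < κ) (hη : 0 ≤ η) (hηκ : η < κ / 2)
    (μ : ℕ → ℝ) (hgap : ∀ i, i + 1 < ℓ → μ i + κ ≤ μ (i + 1))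
    (N M : ℕ) (a : Fin N → ℝ)
    (hM : ∀ c < ℓ, M ≤ (Finset.univ.filter (fun j => |a j - μ c| ≤ η)).card)
    (θ : Fin (ℓ - 1) → ℝ) :
    (M : ℝ) * (κ / 2 - η) ^ 2 ≤ ∑ j, ⨅ i : Fin (ℓ - 1), (a j - θ i) ^ 2 :=
  stmt_6_general ℓ hℓ κ η hκ hηκ μ hgap N M a hM θ
end

section
/- In an optimal (minimum squared error) assignment-based ℓ-clustering of reals a_1,...,a_N, if for level c at least M points lie within η of μ_c where the μ_c are κ-separated (κ > 4η) and the optimal clustering error is strictly less than M(κ/4 − η)², then some center lies in [μ_c − κ/4, μ_c + κ/4]. -/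
open Finset

/-
If no center were within `κ/4` of `μ c`, each of the (at least `M`) data points within `η` of
`μ c` would be at distance more than `κ/4 - η > 0` from every center, so its squared error alone
would be at least `(κ/4 - η)²`, and the total error at least `M (κ/4 - η)²`.
-/

lemma sq_sub_le_sq_sub_of_abs_sub_le {x θ m η r : ℝ} (hηr : η ≤ r) (hx : |x - m| ≤ η)
    (hθ : r ≤ |θ - m|) : (r - η) ^ 2 ≤ (x - θ) ^ 2 := by
  have hdist : r - η ≤ |x - θ| := by
    calc r - η ≤ |θ - m| - |x - m| := by linarith
      _ ≤ |(θ - m) - (x - m)| := abs_sub_abs_le_abs_sub _ _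
      _ = |x - θ| := by rw [abs_sub_comm]; ring_nf
  simpa only [sq_abs] using pow_le_pow_left₀ (sub_nonneg.2 hηr) hdist 2

lemma sq_sub_le_inf'_of_forall_le_abs_sub {x m η r : ℝ} (hηr : η ≤ r) (hx : |x - m| ≤ η)
    {Θ : Finset ℝ} (hΘ : Θ.Nonempty) (hfar : ∀ θ ∈ Θ, r ≤ |θ - m|) :
    (r - η) ^ 2 ≤ Θ.inf' hΘ (fun θ => (x - θ) ^ 2) :=
  (le_inf'_iff hΘ _).2 fun θ hθ => sq_sub_le_sq_sub_of_abs_sub_le hηr hx (hfar θ hθ)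

lemma card_mul_sq_sub_le_sum_inf' {ι : Type*} [Fintype ι] (a : ι → ℝ) {m η r : ℝ} (hηr : η ≤ r)
    {Θ : Finset ℝ} (hΘ : Θ.Nonempty) (hfar : ∀ θ ∈ Θ, r ≤ |θ - m|) :
    (#{j | |a j - m| ≤ η} : ℝ) * (r - η) ^ 2 ≤ ∑ j, Θ.inf' hΘ (fun θ => (a j - θ) ^ 2) := by
  have hnear : ∀ j ∈ ({j | |a j - m| ≤ η} : Finset ι),
      (r - η) ^ 2 ≤ Θ.inf' hΘ (fun θ => (a j - θ) ^ 2) := fun j hj =>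
    sq_sub_le_inf'_of_forall_le_abs_sub hηr (mem_filter.1 hj).2 hΘ hfar
  calc (#{j | |a j - m| ≤ η} : ℝ) * (r - η) ^ 2
      ≤ ∑ j ∈ {j | |a j - m| ≤ η}, Θ.inf' hΘ (fun θ => (a j - θ) ^ 2) := by
        simpa only [nsmul_eq_mul] using card_nsmul_le_sum _ _ _ hnear
    _ ≤ ∑ j, Θ.inf' hΘ (fun θ => (a j - θ) ^ 2) :=
        sum_le_sum_of_subset_of_nonneg (subset_univ _) fun _ _ _ =>
          le_inf' hΘ _ fun _ _ => sq_nonneg _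

theorem stmt_12_general (κ η : ℝ) (hηκ : 4 * η < κ)
    (μ : ℕ → ℝ)
    (c : ℕ)
    (N M : ℕ) (a : Fin N → ℝ)
    (hM : M ≤ (Finset.univ.filter (fun j => |a j - μ c| ≤ η)).card)
    (Θ : Finset ℝ) (hΘ : Θ.Nonempty)
    (herr : ∑ j, Θ.inf' hΘ (fun θ => (a j - θ) ^ 2) < (M : ℝ) * (κ / 4 - η) ^ 2) :
    ∃ θ ∈ Θ, θ ∈ Set.Icc (μ c - κ / 4) (μ c + κ / 4) := by
  simp only [← Real.closedBall_eq_Icc, Metric.mem_closedBall, Real.dist_eq]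
  by_contra! hfar
  have hM' : (M : ℝ) * (κ / 4 - η) ^ 2 ≤ (#{j | |a j - μ c| ≤ η} : ℝ) * (κ / 4 - η) ^ 2 :=
    mul_le_mul_of_nonneg_right (by exact_mod_cast hM) (sq_nonneg _)
  have hlower := card_mul_sq_sub_le_sum_inf' a (η := η) (by linarith) hΘ fun θ hθ => (hfar θ hθ).le
  linarith

/-- If for level `c` at least `M` data points lie within `η` of the level mean `μ c`, the level
means are `κ`-separated with `κ > 4η`, and the clustering error of the centers `Θ` is strictly
less than `M (κ/4 - η)²`, then some center lies in `[μ c - κ/4, μ c + κ/4]`. -/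
theorem stmt_12 (ℓ : ℕ) (κ η : ℝ) (hκ : 0 < κ) (hη : 0 ≤ η) (hηκ : 4 * η < κ)
    (μ : ℕ → ℝ) (hgap : ∀ i, i + 1 < ℓ → μ i + κ ≤ μ (i + 1))
    (c : ℕ) (hc : c < ℓ)
    (N M : ℕ) (a : Fin N → ℝ)
    (hM : M ≤ (Finset.univ.filter (fun j => |a j - μ c| ≤ η)).card)
    (Θ : Finset ℝ) (hΘ : Θ.Nonempty)
    (herr : ∑ j, Θ.inf' hΘ (fun θ => (a j - θ) ^ 2) < (M : ℝ) * (κ / 4 - η) ^ 2) :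
    ∃ θ ∈ Θ, θ ∈ Set.Icc (μ c - κ / 4) (μ c + κ / 4) :=
  stmt_12_general κ η hηκ μ c N M a hM Θ hΘ herr
end
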